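/- For every integer $k \geq 1$ one has $p(Z_k \cdot \sigma) = \frac{n}{k!}\,\ell^{k}$ in $S$. (This is formula (3.5) of Claim 3.1 in the proof of Proposition 1.1: ${\pi_x}_*(Z_k \cdot \sigma_x) = \frac{n}{k!} c_1(L_x)^k$.) -/

import Mathlib

/-!
Since `σ² = -σL` and `σc = σ(2σ + L) = -σL`, multiplication by `σ` turns both `σ` and `c` into `-L`:
`c^j σ^(m+1) = σ (-L)^(j+m)`. As `σ t_j = 0` for `j ≥ 1`, every summand of `Z_k σ` becomes a
rational multiple of `σ (-L)^k`, and the coefficient is `(-1)^k n / k!` minus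
`∑_j (-1)^(k-j) / ((k-j)! j!) = (1 - 1)^k / k! = 0`. The projection formula then gives
`p(σ L^k) = ℓ^k p(σ) = ℓ^k`.
-/

open Finset

theorem mul_pow_eq_mul_pow_of_mul_eq {M : Type*} [CommMonoid M] {a x y : M}
    (h : a * x = a * y) (m : ℕ) : a * x ^ m = a * y ^ m := by
  induction m with
  | zero => simp
  | succ m ih =>
    rw [pow_succ, pow_succ, ← mul_assoc, ih, mul_right_comm, h, mul_right_comm, mul_assoc]

theorem sum_range_neg_one_pow_div_factorial_mul_inv_factorial {k : ℕ} (hk : k ≠ 0) :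
    ∑ j ∈ range (k + 1), (-1 : ℚ) ^ (k - j) / (k - j).factorial * (j.factorial : ℚ)⁻¹ = 0 := by
  have hbinom : ∑ j ∈ range (k + 1), (1 : ℚ) ^ j * (-1) ^ (k - j) * k.choose j = 0 := by
    rw [← add_pow, add_neg_cancel, zero_pow hk]
  have hk! : (k.factorial : ℚ) ≠ 0 := by positivity
  rw [← mul_right_inj' hk!, mul_sum, mul_zero, ← hbinom]
  refine sum_congr rfl fun j hj => ?_
  rw [Nat.cast_choose ℚ (Nat.lt_succ_iff.mp (mem_range.mp hj))]
  field_simp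
  ring

section

variable {R : Type*} [CommRing R] {σ L : R}

theorem pow_succ_eq_mul_neg_pow (hσ : σ ^ 2 = -(σ * L)) (m : ℕ) :
    σ ^ (m + 1) = σ * (-L) ^ m := by
  have h : σ * σ = σ * (-L) := by rw [← sq, hσ, mul_neg]
  rw [pow_succ', mul_pow_eq_mul_pow_of_mul_eq h]

theorem two_mul_add_pow_mul_pow_succ (hσ : σ ^ 2 = -(σ * L)) (j m : ℕ) :
    (2 * σ + L) ^ j * σ ^ (m + 1) = σ * (-L) ^ (j + m) := by
  have hc : σ * (2 * σ + L) = σ * (-L) := by linear_combination 2 * hσ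
  rw [pow_succ_eq_mul_neg_pow hσ, mul_left_comm, ← mul_assoc, mul_pow_eq_mul_pow_of_mul_eq hc,
    pow_add, mul_assoc]

variable [Algebra ℚ R]

theorem neg_one_pow_smul_neg_pow (x : R) (k : ℕ) : (-1 : ℚ) ^ k • (-x) ^ k = x ^ k := by
  rw [← neg_one_smul ℚ x, smul_pow, smul_smul, ← mul_pow, neg_one_mul, neg_neg, one_pow,
    one_smul]

theorem smul_sub_inv_factorial_smul_pow_mul_pow_mul (hσ : σ ^ 2 = -(σ * L)) (r : ℚ) (x : R)
    (j m : ℕ) :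
    r • ((x - (j.factorial : ℚ)⁻¹ • (2 * σ + L) ^ j) * σ ^ m) * σ =
      r • (x * σ ^ (m + 1)) - (r * (j.factorial : ℚ)⁻¹) • (σ * (-L) ^ (j + m)) := by
  rw [smul_mul_assoc, mul_assoc, ← pow_succ, sub_mul, smul_mul_assoc,
    two_mul_add_pow_mul_pow_succ hσ, smul_sub, smul_smul]

theorem sum_smul_sub_inv_factorial_smul_pow_mul_pow_mul
    (hσ : σ ^ 2 = -(σ * L)) {n : ℕ} {t : ℕ → R} (ht0 : t 0 = n) (ht : ∀ j, 1 ≤ j → σ * t j = 0)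
    {k : ℕ} (hk : k ≠ 0) :
    (∑ j ∈ range (k + 1), ((-1 : ℚ) ^ (k - j) / (k - j).factorial) •
        ((t j - (j.factorial : ℚ)⁻¹ • (2 * σ + L) ^ j) * σ ^ (k - j))) * σ =
      ((n : ℚ) / k.factorial) • (σ * L ^ k) := by
  have hterm : ∀ j ∈ range (k + 1),
      ((-1 : ℚ) ^ (k - j) / (k - j).factorial) •
          ((t j - (j.factorial : ℚ)⁻¹ • (2 * σ + L) ^ j) * σ ^ (k - j)) * σ =
        ((-1 : ℚ) ^ (k - j) / (k - j).factorial) • (t j * σ ^ (k - j + 1)) -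
          ((-1 : ℚ) ^ (k - j) / (k - j).factorial * (j.factorial : ℚ)⁻¹) • (σ * (-L) ^ k) := by
    intro j hj
    rw [smul_sub_inv_factorial_smul_pow_mul_pow_mul hσ,
      Nat.add_sub_cancel' (Nat.lt_succ_iff.mp (mem_range.mp hj))]
  have htail : ∀ j ∈ range (k + 1), j ≠ 0 →
      ((-1 : ℚ) ^ (k - j) / (k - j).factorial) • (t j * σ ^ (k - j + 1)) = 0 := by
    intro j _ hj
    rw [pow_succ', ← mul_assoc, mul_comm (t j), ht j (Nat.one_le_iff_ne_zero.mpr hj), zero_mul,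
      smul_zero]
  have hhead : ((-1 : ℚ) ^ k / k.factorial) • ((n : R) * σ ^ (k + 1)) =
      ((n : ℚ) / k.factorial) • (σ * L ^ k) := by
    rw [pow_succ_eq_mul_neg_pow hσ, ← neg_one_pow_smul_neg_pow L k, mul_smul_comm, smul_smul,
      ← nsmul_eq_mul, ← Nat.cast_smul_eq_nsmul ℚ, smul_smul]
    congr 1
    ring
  rw [sum_mul, sum_congr rfl hterm, sum_sub_distrib, ← sum_smul,
    sum_range_neg_one_pow_div_factorial_mul_inv_factorial hk, zero_smul, sub_zero,
    sum_eq_single_of_mem 0 (by simp) htail, ht0, Nat.sub_zero, hhead]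

end

theorem stmt_6_general {R S : Type*} [CommRing R] [Algebra ℚ R] [CommRing S] [Algebra ℚ S]
    (σ L : R) (hσ : σ ^ 2 = -(σ * L))
    (n : ℕ) (t : ℕ → R) (ht0 : t 0 = (n : R)) (ht : ∀ j, 1 ≤ j → σ * t j = 0)
    (c : R) (hc : c = 2 * σ + L)
    (Z : ℕ → R)
    (hZ : ∀ k : ℕ, Z k = ∑ j ∈ Finset.range (k + 1),
      (((-1 : ℚ) ^ (k - j) / (k - j).factorial) •
        ((t j - ((j.factorial : ℚ)⁻¹ • c ^ j)) * σ ^ (k - j))))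
    (π : S →+* R) (ℓ : S) (hL : L = π ℓ)
    (p : R →+ S)
    (hproj : ∀ (a : S) (x : R), p (π a * x) = a * p x)
    (hpσ : p σ = 1)
    (k : ℕ) (hk : 1 ≤ k) :
    p (Z k * σ) = ((n : ℚ) / k.factorial) • ℓ ^ k := by
  have hZσ : Z k * σ = ((n : ℚ) / k.factorial) • (π (ℓ ^ k) * σ) := by
    rw [hZ, hc, sum_smul_sub_inv_factorial_smul_pow_mul_pow_mul hσ ht0 ht (by omega), hL,
      map_pow, mul_comm]
  rw [hZσ, map_rat_smul, hproj, hpσ, mul_one]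

/-- Formula (3.5) of Claim 3.1:
`π_* (Z_k · σ_x) = (n/k!) c₁(L_x)^k`, i.e. `p (Z k * σ) = (n/k!) ℓ^k` for `k ≥ 1`. -/
theorem stmt_6 {R S : Type*} [CommRing R] [Algebra ℚ R] [CommRing S] [Algebra ℚ S]
    (σ L : R) (hσ : σ ^ 2 = -(σ * L))
    (n : ℕ) (t : ℕ → R) (ht0 : t 0 = (n : R)) (ht : ∀ j, 1 ≤ j → σ * t j = 0)
    (c : R) (hc : c = 2 * σ + L)
    (Z : ℕ → R)
    (hZ : ∀ k : ℕ, Z k = ∑ j ∈ Finset.range (k + 1),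
      (((-1 : ℚ) ^ (k - j) / (k - j).factorial) •
        ((t j - ((j.factorial : ℚ)⁻¹ • c ^ j)) * σ ^ (k - j))))
    (π : S →+* R) (ℓ : S) (hL : L = π ℓ)
    (p : R →+ S)
    (hproj : ∀ (a : S) (x : R), p (π a * x) = a * p x)
    (hpπ : ∀ a : S, p (π a) = 0) (hpσ : p σ = 1)
    (k : ℕ) (hk : 1 ≤ k) :
    p (Z k * σ) = ((n : ℚ) / k.factorial) • ℓ ^ k :=
  stmt_6_general σ L hσ n t ht0 ht c hc Z hZ π ℓ hL p hproj hpσ k hk
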